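/- arXiv:math/0205130 — 3 statements merged into one kernel-verified Lean document; each statement's English description precedes it below -/
import Mathlib

section
/- Let k be a finite field with q elements. Let C be a commutative k-algebra that is smooth over k, let B be a commutative C-algebra that is étale over C, and let D be an arbitrary commutative k-algebra. Let f : C → B ⊗_k D be a k-algebra homomorphism, and let I ⊆ B ⊗_k D be the ideal generated by the elements f(c)^q − (ι(c) ⊗ 1) for all c ∈ C, where ι : C → B is the structure homomorphism. Then the quotient algebra (B ⊗_k D)/I, regarded as a D-algebra via d ↦ 1 ⊗ d, is étale over D. -/
/-!
Over a finite field `k` with `q` elements, `x ↦ x ^ q` is a `k`-algebra endomorphism of every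
`k`-algebra, and on a square-zero extension `Q → Q ⧸ J` it factors through `Q ⧸ J`. Hence, given
a `D`-algebra map `ᾱ : B ⊗ D → Q ⧸ J`, the map `ψ : C → Q`, `c ↦ (any lift of ᾱ (f c)) ^ q`, is a
well-defined `k`-algebra map, and every lift `α` of `ᾱ` sends `f c ^ q` to `ψ c`. So `α` kills `I`
exactly when its restriction to `B` is a `C`-algebra map for the `C`-algebra structure `ψ` on `Q`;
such restrictions lift uniquely because `B` is formally étale over `C`, and a `D`-algebra map out
of `B ⊗ D` is determined by its restriction to `B`.
-/

open scoped TensorProduct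

namespace Ideal.Quotient

variable (k : Type*) [Field k] [Fintype k] {Q : Type*} [CommRing Q] [Algebra k Q]

noncomputable def frobeniusLift (J : Ideal Q) (hJ : J ^ Fintype.card k = ⊥) : Q ⧸ J →ₐ[k] Q :=
  liftₐ J (FiniteField.frobeniusAlgHom k Q) fun j hj => by
    simpa [hJ] using Ideal.pow_mem_pow hj (Fintype.card k)

variable {k} {J : Ideal Q} (hJ : J ^ Fintype.card k = ⊥)

@[simp]
theorem frobeniusLift_mk (x : Q) : frobeniusLift k J hJ (mk J x) = x ^ Fintype.card k := rfl

@[simp]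
theorem mk_frobeniusLift (x : Q ⧸ J) : mk J (frobeniusLift k J hJ x) = x ^ Fintype.card k := by
  obtain ⟨x, rfl⟩ := mk_surjective x
  rw [frobeniusLift_mk, map_pow]

end Ideal.Quotient

namespace AlgHom

variable {R C A : Type*} [CommRing R] [CommRing C] [CommRing A] [Algebra R C] [Algebra R A]

def coequalizerIdeal (σ τ : C →ₐ[R] A) : Ideal A :=
  Ideal.span (Set.range fun c => σ c - τ c)

variable (σ τ : C →ₐ[R] A)

theorem coequalizerIdeal_le_ker_iff {Q F : Type*} [CommRing Q] [FunLike F A Q]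
    [RingHomClass F A Q] (g : F) :
    coequalizerIdeal σ τ ≤ RingHom.ker g ↔ ∀ c, g (σ c) = g (τ c) := by
  simp [coequalizerIdeal, Ideal.span_le, Set.range_subset_iff, sub_eq_zero]

theorem coequalizerIdeal_eq_span_image {s : Set C} (hs : Algebra.adjoin R s = ⊤) :
    coequalizerIdeal σ τ = Ideal.span ((fun c => σ c - τ c) '' s) := by
  set J := Ideal.span ((fun c => σ c - τ c) '' s)
  refine le_antisymm ?_ (Ideal.span_mono (Set.image_subset_range _ _))
  have hJ : (Ideal.Quotient.mkₐ R J).comp σ = (Ideal.Quotient.mkₐ R J).comp τ :=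
    ext_of_adjoin_eq_top hs fun c hc =>
      Ideal.Quotient.eq.mpr (Ideal.subset_span ⟨c, hc, rfl⟩)
  rw [← Ideal.mk_ker (I := J), coequalizerIdeal_le_ker_iff]
  exact AlgHom.congr_fun hJ

theorem coequalizerIdeal_fg [Algebra.FiniteType R C] : (coequalizerIdeal σ τ).FG := by
  obtain ⟨s, hs⟩ := Algebra.FiniteType.out (R := R) (A := C)
  rw [coequalizerIdeal_eq_span_image σ τ hs]
  exact Submodule.fg_span (s.finite_toSet.image _)

end AlgHom

theorem Algebra.FormallyEtale.existsUnique_lift_of_comp_eq {k C B Q : Type*} [CommRing k]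
    [CommRing C] [CommRing B] [CommRing Q] [Algebra k C] [Algebra k B] [Algebra C B]
    [IsScalarTower k C B] [Algebra k Q] [Algebra.FormallyEtale C B] {J : Ideal Q}
    (hJ : J ^ 2 = ⊥) (ψ : C →ₐ[k] Q) (β' : B →ₐ[k] Q ⧸ J)
    (h : β'.comp (IsScalarTower.toAlgHom k C B) = (Ideal.Quotient.mkₐ k J).comp ψ) :
    ∃! β : B →ₐ[k] Q, β.comp (IsScalarTower.toAlgHom k C B) = ψ ∧
      (Ideal.Quotient.mkₐ k J).comp β = β' := by
  let : Algebra C Q := ψ.toAlgebra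
  have : IsScalarTower k C Q := IsScalarTower.of_algebraMap_eq' ψ.comp_algebraMap.symm
  let overC {S : Type _} [CommRing S] [Algebra k S] [Algebra C S] (g : B →ₐ[k] S)
      (hg : ∀ c, g (algebraMap C B c) = algebraMap C S c) : B →ₐ[C] S :=
    { g with commutes' := hg }
  have lift := Algebra.FormallyEtale.comp_bijective C B J hJ
  obtain ⟨β, hβ⟩ := lift.2 (overC β' fun c => AlgHom.congr_fun h c)
  refine ⟨β.restrictScalars k,
    ⟨AlgHom.ext β.commutes, AlgHom.ext fun b => AlgHom.congr_fun hβ b⟩, ?_⟩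
  rintro γ ⟨hγψ, hγ⟩
  have : overC γ (AlgHom.congr_fun hγψ) = β :=
    lift.1 (AlgHom.ext fun b => (AlgHom.congr_fun hγ b).trans (AlgHom.congr_fun hβ b).symm)
  exact AlgHom.ext fun b => AlgHom.congr_fun this b

section RightBaseChange

attribute [local instance] Algebra.TensorProduct.rightAlgebra

namespace Algebra.TensorProduct

variable {k B D Q : Type*} [CommRing k] [CommRing B] [Algebra k B] [CommRing D] [Algebra k D]
  [CommRing Q] [Algebra k Q] [Algebra D Q] [IsScalarTower k D Q]

noncomputable def liftBaseChangeRight (β : B →ₐ[k] Q) : B ⊗[k] D →ₐ[D] Q :=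
  { productMap β (IsScalarTower.toAlgHom k D Q) with
    commutes' := fun d => by simp [right_algebraMap_apply] }

@[simp]
theorem liftBaseChangeRight_tmul (β : B →ₐ[k] Q) (b : B) (d : D) :
    liftBaseChangeRight β (b ⊗ₜ d) = β b * algebraMap D Q d := rfl

theorem rightAlgebra_algHom_ext {g h : B ⊗[k] D →ₐ[D] Q}
    (H : (g.restrictScalars k).comp includeLeft = (h.restrictScalars k).comp includeLeft) :
    g = h :=
  AlgHom.restrictScalars_injective k <| ext H <| AlgHom.ext fun d =>
    (g.commutes d).trans (h.commutes d).symm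

end Algebra.TensorProduct

end RightBaseChange

section FrobeniusLocus

attribute [local instance] Algebra.TensorProduct.rightAlgebra

open Ideal.Quotient

variable {k C B D : Type*} [Field k] [Fintype k] [CommRing C] [Algebra k C]
  [CommRing B] [Algebra k B] [Algebra C B] [IsScalarTower k C B] [CommRing D] [Algebra k D]

noncomputable def frobeniusLocusIdeal (f : C →ₐ[k] B ⊗[k] D) : Ideal (B ⊗[k] D) :=
  AlgHom.coequalizerIdeal ((FiniteField.frobeniusAlgHom k _).comp f)
    (Algebra.TensorProduct.includeLeft.comp (IsScalarTower.toAlgHom k C B))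

theorem frobeniusLocusIdeal_le_ker_iff (f : C →ₐ[k] B ⊗[k] D) {Q F : Type*} [CommRing Q]
    [FunLike F (B ⊗[k] D) Q] [RingHomClass F (B ⊗[k] D) Q] (g : F) :
    frobeniusLocusIdeal f ≤ RingHom.ker g ↔
      ∀ c, g (f c) ^ Fintype.card k = g (algebraMap C B c ⊗ₜ 1) := by
  simp only [frobeniusLocusIdeal, AlgHom.coequalizerIdeal_le_ker_iff, AlgHom.comp_apply,
    FiniteField.frobeniusAlgHom_apply, map_pow]
  rfl

theorem existsUnique_lift_of_frobeniusLocusIdeal_le_ker [Algebra.FormallyEtale C B]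
    (f : C →ₐ[k] B ⊗[k] D) {Q : Type*} [CommRing Q] [Algebra k Q] [Algebra D Q]
    [IsScalarTower k D Q] {J : Ideal Q} (hJ : J ^ 2 = ⊥) (α' : B ⊗[k] D →ₐ[D] Q ⧸ J)
    (hα' : frobeniusLocusIdeal f ≤ RingHom.ker α') :
    ∃! α : B ⊗[k] D →ₐ[D] Q, frobeniusLocusIdeal f ≤ RingHom.ker α ∧ (mkₐ D J).comp α = α' := by
  have hJq : J ^ Fintype.card k = ⊥ :=
    le_bot_iff.mp (hJ ▸ Ideal.pow_le_pow_right Fintype.one_lt_card)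
  set ψ : C →ₐ[k] Q := (frobeniusLift k J hJq).comp ((α'.restrictScalars k).comp f)
  have frobenius_of_lift (α : B ⊗[k] D →ₐ[D] Q) (hα : (mkₐ D J).comp α = α') (c : C) :
      α (f c) ^ Fintype.card k = ψ c := by
    rw [← frobeniusLift_mk hJq]
    subst hα
    rfl
  set β' : B →ₐ[k] Q ⧸ J := (α'.restrictScalars k).comp Algebra.TensorProduct.includeLeft
  have hβ' : β'.comp (IsScalarTower.toAlgHom k C B) = (mkₐ k J).comp ψ := by
    ext c
    show α' (algebraMap C B c ⊗ₜ 1) = mk J (frobeniusLift k J hJq (α' (f c)))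
    rw [mk_frobeniusLift, (frobeniusLocusIdeal_le_ker_iff f α').mp hα' c]
  obtain ⟨β, ⟨hβψ, hβ⟩, hβ_unique⟩ :=
    Algebra.FormallyEtale.existsUnique_lift_of_comp_eq hJ ψ β' hβ'
  set α := Algebra.TensorProduct.liftBaseChangeRight (D := D) β
  have hα : (mkₐ D J).comp α = α' := Algebra.TensorProduct.rightAlgebra_algHom_ext <|
    AlgHom.ext fun b => by simpa [α, β'] using AlgHom.congr_fun hβ b
  refine ⟨α, ⟨(frobeniusLocusIdeal_le_ker_iff f α).mpr fun c => ?_, hα⟩, ?_⟩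
  · rw [frobenius_of_lift α hα]
    simpa [α] using (AlgHom.congr_fun hβψ c).symm
  rintro γ ⟨hγI, hγ⟩
  have hγβ : (γ.restrictScalars k).comp Algebra.TensorProduct.includeLeft = β := by
    refine hβ_unique _ ⟨AlgHom.ext fun c => ?_, AlgHom.ext fun b => ?_⟩
    · exact ((frobeniusLocusIdeal_le_ker_iff f γ).mp hγI c).symm.trans (frobenius_of_lift γ hγ c)
    · exact AlgHom.congr_fun hγ (b ⊗ₜ 1)
  refine Algebra.TensorProduct.rightAlgebra_algHom_ext (hγβ.trans (AlgHom.ext fun b => ?_))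
  simp [α]

theorem formallyEtale_quotient_frobeniusLocusIdeal [Algebra.FormallyEtale C B]
    (f : C →ₐ[k] B ⊗[k] D) :
    Algebra.FormallyEtale D ((B ⊗[k] D) ⧸ frobeniusLocusIdeal f) := by
  set I := frobeniusLocusIdeal f
  refine Algebra.FormallyEtale.iff_comp_bijective.mpr fun Q _ _ J hJ => ?_
  let : Algebra k Q := ((algebraMap D Q).comp (algebraMap k D)).toAlgebra
  have : IsScalarTower k D Q := IsScalarTower.of_algebraMap_eq' rfl
  have le_ker_comp_mkₐ {S : Type _} [CommRing S] [Algebra D S] (g : (B ⊗[k] D) ⧸ I →ₐ[D] S) :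
      I ≤ RingHom.ker (g.comp (mkₐ D I)) := fun x hx => by
    simp [eq_zero_iff_mem.mpr hx]
  constructor
  · intro g₁ g₂ hg
    obtain ⟨α, -, hα_unique⟩ := existsUnique_lift_of_frobeniusLocusIdeal_le_ker f hJ
      (((mkₐ D J).comp g₁).comp (mkₐ D I)) (le_ker_comp_mkₐ _)
    refine algHom_ext D ((hα_unique _ ⟨le_ker_comp_mkₐ g₁, rfl⟩).trans
      (hα_unique _ ⟨le_ker_comp_mkₐ g₂, by rw [← AlgHom.comp_assoc, hg]⟩).symm)
  · intro g
    obtain ⟨α, ⟨hαI, hα⟩, -⟩ := existsUnique_lift_of_frobeniusLocusIdeal_le_ker f hJ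
      (g.comp (mkₐ D I)) (le_ker_comp_mkₐ g)
    refine ⟨liftₐ I α fun x hx => RingHom.mem_ker.mp (hαI hx), algHom_ext D ?_⟩
    rw [← hα]
    rfl

end FrobeniusLocus

universe u

/-- Let `k` be a finite field with `q` elements, `C` a smooth commutative
`k`-algebra, `B` a commutative `C`-algebra étale over `C`, and `D` an arbitrary commutative
`k`-algebra. Let `f : C → B ⊗[k] D` be a `k`-algebra homomorphism and let
`I ⊆ B ⊗[k] D` be the ideal generated by the elements `f(c)^q - ι(c) ⊗ 1` for `c ∈ C`,
where `ι : C → B` is the structure homomorphism. Then `(B ⊗[k] D)/I`, regarded as a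
`D`-algebra via `d ↦ 1 ⊗ d`, is étale over `D`. -/
theorem stmt1 (k C B D : Type u) [Field k] [Fintype k] (q : ℕ) (hq : Fintype.card k = q)
    [CommRing C] [Algebra k C] [Algebra.Smooth k C]
    [CommRing B] [Algebra k B] [Algebra C B] [IsScalarTower k C B] [Algebra.Etale C B]
    [CommRing D] [Algebra k D]
    (f : C →ₐ[k] B ⊗[k] D)
    (I : Ideal (B ⊗[k] D))
    (hI : I = Ideal.span
      {x : B ⊗[k] D | ∃ c : C, x = f c ^ q - (algebraMap C B c) ⊗ₜ[k] (1 : D)}) :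
    letI : Algebra D ((B ⊗[k] D) ⧸ I) :=
      ((Ideal.Quotient.mkₐ k I).comp (Algebra.TensorProduct.includeRight)).toRingHom.toAlgebra
    Algebra.Etale D ((B ⊗[k] D) ⧸ I) := by
  subst hq
  obtain rfl : I = frobeniusLocusIdeal f :=
    hI.trans (congrArg Ideal.span (Set.ext fun x => exists_congr fun c => eq_comm))
  let : Algebra D (B ⊗[k] D) := Algebra.TensorProduct.rightAlgebra
  convert (?_ : Algebra.Etale D ((B ⊗[k] D) ⧸ frobeniusLocusIdeal f))
  · exact Algebra.algebra_ext _ _ fun d => rfl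
  have : Algebra.FinitePresentation k B := .trans k C B
  have : Algebra.FinitePresentation D (B ⊗[k] D) :=
    .equiv (Algebra.IsPushout.equiv k D B (B ⊗[k] D))
  exact { formallyEtale := formallyEtale_quotient_frobeniusLocusIdeal f
          finitePresentation := .quotient (AlgHom.coequalizerIdeal_fg _ _) }
end

section
/- Let q be a power of a prime p, let 𝔽_q be a finite field with q elements, let X be a scheme locally of finite type over 𝔽_q, and let Fr_X : X → X be its q-power absolute Frobenius. Let V be the fixed-point subscheme of Fr_X, i.e. the equalizer of Fr_X and the identity morphism of X. Then the structure morphism V → Spec 𝔽_q is étale. -/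
/-!
Over an affine open `U = Spec A` of `X`, which `Fr` preserves and on which it acts by `a ↦ a ^ q`,
the fixed-point scheme is `Spec (A ⧸ I)` with `I` generated by the `a ^ q - a`. Every element of
`A ⧸ I` satisfies `b ^ q = b`, so `A ⧸ I` is a reduced finite `k`-algebra, hence a finite product
of finite extensions of `k`; these are separable since `k` is perfect, so `A ⧸ I` is étale over `k`.
-/

open AlgebraicGeometry CategoryTheory CategoryTheory.Limits

universe u

theorem IsReduced.of_forall_pow_eq_self {R : Type*} [CommRing R] {q : ℕ} (hq : 1 < q)
    (h : ∀ x : R, x ^ q = x) : IsReduced R where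
  eq_zero x hx := by
    have hunit : IsUnit (1 - x ^ (q - 1)) := (hx.pow_of_pos (by omega)).isUnit_one_sub
    refine hunit.mul_left_eq_zero.mp ?_
    rw [mul_sub, mul_one, ← pow_succ', Nat.sub_add_cancel hq.le, h, sub_self]

open Polynomial in
theorem Algebra.Etale.of_forall_pow_eq_self (k B : Type*) [Field k] [PerfectField k] [CommRing B]
    [Algebra k B] [Algebra.FiniteType k B] {q : ℕ} (hq : 1 < q) (h : ∀ b : B, b ^ q = b) :
    Algebra.Etale k B := by
  have : IsReduced B := .of_forall_pow_eq_self hq h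
  have : Algebra.IsIntegral k B :=
    ⟨fun b ↦ ⟨X ^ q - X, monic_X_pow_sub (by simpa using hq), by simp [h b]⟩⟩
  have : Module.Finite k B := Algebra.IsIntegral.finite
  have : IsArtinianRing B := isArtinian_of_tower k inferInstance
  let := IsArtinianRing.fieldOfSubtypeIsMaximal B
  rw [Algebra.Etale.iff_exists_algEquiv_prod]
  exact ⟨_, inferInstance, _, _, _, (IsArtinianRing.equivPi B).restrictScalars k,
    fun I ↦ ⟨Module.Finite.quotient k I.asIdeal, inferInstance⟩⟩

namespace AlgebraicGeometry

-- Instance search does not get this from `HasRingHomProperty @Etale RingHom.Etale` by itself.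
instance : IsZariskiLocalAtSource @Etale.{u} :=
  HasRingHomProperty.instIsZariskiLocalAtSource (Q := RingHom.Etale)

theorem etale_of_forall_pow_eq_self {k : Type u} [Field k] [PerfectField k] {B : CommRingCat.{u}}
    (f : Spec B ⟶ Spec (.of k)) [LocallyOfFiniteType f] {q : ℕ} (hq : 1 < q)
    (h : ∀ b : B, b ^ q = b) : Etale f := by
  have : (Spec.preimage f).hom.FiniteType := by
    rw [← HasRingHomProperty.Spec_iff (P := @LocallyOfFiniteType), Spec.map_preimage]
    infer_instance
  rw [← Spec.map_preimage f, HasRingHomProperty.Spec_iff (P := @Etale)]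
  algebraize [(Spec.preimage f).hom]
  exact Algebra.Etale.of_forall_pow_eq_self k B hq h

section QuotientFork

variable {A : CommRingCat.{u}} (φ : A ⟶ A)

def fixedPointIdeal : Ideal A := Ideal.span (Set.range fun a ↦ φ a - a)

abbrev quotientFixedPointIdeal : A ⟶ .of (A ⧸ fixedPointIdeal φ) :=
  CommRingCat.ofHom (Ideal.Quotient.mk _)

lemma comp_quotientFixedPointIdeal : φ ≫ quotientFixedPointIdeal φ = quotientFixedPointIdeal φ := by
  ext a
  exact Ideal.Quotient.eq.mpr (Ideal.subset_span ⟨a, rfl⟩)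

noncomputable def specQuotientFork : Fork (Spec.map φ) (𝟙 (Spec A)) :=
  Fork.ofι (Spec.map (quotientFixedPointIdeal φ)) <| by
    rw [← Spec.map_comp, comp_quotientFixedPointIdeal, Category.comp_id]

instance : IsClosedImmersion (Spec.map (quotientFixedPointIdeal φ)) :=
  .spec_of_surjective _ Ideal.Quotient.mk_surjective

noncomputable def isLimitSpecQuotientFork : IsLimit (specQuotientFork φ) :=
  Fork.IsLimit.mk' _ fun s ↦
    -- `r` corresponds to `s.ι` under `Γ ⊣ Spec`, and the fork condition becomes `φ ≫ r = r`.
    let r := ((ΓSpec.adjunction.homEquiv s.pt (.op A)).symm s.ι).unop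
    have hr : φ ≫ r = r := by
      have := congr((ΓSpec.adjunction.homEquiv s.pt (.op A)).symm $(s.condition))
      rw [Category.comp_id] at this
      change (ΓSpec.adjunction.homEquiv _ _).symm (s.ι ≫ Scheme.Spec.map φ.op) = _ at this
      rw [Adjunction.homEquiv_naturality_right_symm] at this
      exact congrArg Quiver.Hom.unop this
    have hker : fixedPointIdeal φ ≤ RingHom.ker r.hom := Ideal.span_le.mpr <| by
      rintro _ ⟨a, rfl⟩
      rw [SetLike.mem_coe, RingHom.mem_ker, map_sub, ← CommRingCat.comp_apply, hr, sub_self]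
    let ψ : CommRingCat.of (A ⧸ fixedPointIdeal φ) ⟶ Γ(s.pt, ⊤) :=
      CommRingCat.ofHom (Ideal.Quotient.lift _ r.hom hker)
    have hψ : quotientFixedPointIdeal φ ≫ ψ = r := by ext; rfl
    have hfac :
        ΓSpec.adjunction.homEquiv _ _ ψ.op ≫ Spec.map (quotientFixedPointIdeal φ) = s.ι := by
      have := ΓSpec.adjunction.homEquiv_naturality_right (X := s.pt) ψ.op
        (quotientFixedPointIdeal φ).op
      change _ ≫ Scheme.Spec.map (quotientFixedPointIdeal φ).op = _
      rw [← this]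
      exact congr(ΓSpec.adjunction.homEquiv _ _ $(hψ).op).trans (Equiv.apply_symm_apply _ _)
    ⟨_, hfac, fun hm ↦ (cancel_mono (Spec.map (quotientFixedPointIdeal φ))).mp (hm.trans hfac.symm)⟩

lemma pow_eq_self_of_apply_eq_pow {q : ℕ} (h : ∀ a, φ a = a ^ q) (b : A ⧸ fixedPointIdeal φ) :
    b ^ q = b := by
  obtain ⟨a, rfl⟩ := Ideal.Quotient.mk_surjective b
  rw [← map_pow, ← h, Ideal.Quotient.eq]
  exact Ideal.subset_span ⟨a, rfl⟩

end QuotientFork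

theorem exists_iso_equalizer_preimage_opensRange {X Y : Scheme.{u}} {f : X ⟶ X} {g : Y ⟶ Y}
    (j : Y ⟶ X) [IsOpenImmersion j] (hj : g ≫ j = j ≫ f) {c : Fork g (𝟙 Y)} (hc : IsLimit c) :
    ∃ e : (equalizer.ι f (𝟙 X) ⁻¹ᵁ j.opensRange).toScheme ≅ c.pt,
      (equalizer.ι f (𝟙 X) ⁻¹ᵁ j.opensRange).ι ≫ equalizer.ι f (𝟙 X) = e.hom ≫ c.ι ≫ j := by
  set ι := equalizer.ι f (𝟙 X)
  set W := ι ⁻¹ᵁ j.opensRange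
  have hι : ι ≫ f = ι := by simpa using equalizer.condition f (𝟙 X)
  let ρ : W.toScheme ⟶ Y := IsOpenImmersion.lift j (W.ι ≫ ι) <| by
    rintro _ ⟨w, rfl⟩
    rw [Scheme.Hom.comp_apply]
    exact w.2
  have hρ : ρ ≫ j = W.ι ≫ ι := IsOpenImmersion.lift_fac _ _ _
  have hρg : ρ ≫ g = ρ ≫ 𝟙 Y := by
    rw [Category.comp_id, ← cancel_mono j, Category.assoc, hj, reassoc_of% hρ, hι, hρ]
  let δ : W.toScheme ⟶ c.pt := hc.lift (Fork.ofι ρ hρg)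
  have hδ : δ ≫ c.ι = ρ := hc.fac _ .zero
  have hcj : (c.ι ≫ j) ≫ f = (c.ι ≫ j) ≫ 𝟙 X := by
    rw [Category.assoc, ← hj, ← Category.assoc, c.condition]
    simp
  let β : c.pt ⟶ W.toScheme := IsOpenImmersion.lift W.ι (equalizer.lift _ hcj) <| by
    rw [Scheme.Opens.range_ι]
    rintro _ ⟨t, rfl⟩
    change ι _ ∈ j.opensRange
    rw [← Scheme.Hom.comp_apply, equalizer.lift_ι, Scheme.Hom.comp_apply]
    exact Set.mem_range_self _
  have hβ₀ : β ≫ W.ι = equalizer.lift _ hcj := IsOpenImmersion.lift_fac _ _ _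
  have hβ : β ≫ W.ι ≫ ι = c.ι ≫ j := by
    rw [reassoc_of% hβ₀, equalizer.lift_ι]
  refine ⟨⟨δ, β, ?_, ?_⟩, by rw [reassoc_of% hδ, hρ]⟩
  · rw [← cancel_mono W.ι, ← cancel_mono ι, Category.assoc, Category.assoc, hβ,
      reassoc_of% hδ, hρ, Category.id_comp]
  · refine Fork.IsLimit.hom_ext hc ((cancel_mono j).mp ?_)
    rw [Category.assoc, Category.assoc, reassoc_of% hδ, hρ, hβ, Category.id_comp]

section Frobenius

variable {X : Scheme.{u}} {q : ℕ} {Fr : X ⟶ X}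

lemma appLE_self_eq_pow
    (hFr_app : ∀ (U : X.Opens) (hU : Fr ⁻¹ᵁ U = U) (s : Γ(X, U)),
      Fr.app U s = X.presheaf.map (eqToHom hU).op (s ^ q))
    {U : X.Opens} (hU : Fr ⁻¹ᵁ U = U) (a : Γ(X, U)) : Fr.appLE U U hU.ge a = a ^ q := by
  rw [Scheme.Hom.appLE, CommRingCat.comp_apply, hFr_app U hU, ← CommRingCat.comp_apply,
    ← Functor.map_comp, Subsingleton.elim ((eqToHom hU).op ≫ _) (𝟙 _),
    CategoryTheory.Functor.map_id]
  rfl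

theorem etale_equalizer_ι_comp_restrict_affine {k : Type u} [Field k] [PerfectField k]
    (sX : X ⟶ Spec (.of k)) [LocallyOfFiniteType sX] (hq : 1 < q)
    (hFr_base : ∀ x, Fr.base x = x)
    (hFr_app : ∀ (U : X.Opens) (hU : Fr ⁻¹ᵁ U = U) (s : Γ(X, U)),
      Fr.app U s = X.presheaf.map (eqToHom hU).op (s ^ q))
    {U : X.Opens} (hU : IsAffineOpen U) :
    Etale ((equalizer.ι Fr (𝟙 X) ⁻¹ᵁ U).ι ≫ equalizer.ι Fr (𝟙 X) ≫ sX) := by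
  have hFrU : Fr ⁻¹ᵁ U = U := by
    ext x
    simp [hFr_base]
  let φ := Fr.appLE U U hFrU.ge
  obtain ⟨e, he⟩ := exists_iso_equalizer_preimage_opensRange hU.fromSpec
    (hU.SpecMap_appLE_fromSpec Fr hU hFrU.ge) (isLimitSpecQuotientFork φ)
  rw [← hU.opensRange_fromSpec, reassoc_of% he]
  have : Etale ((specQuotientFork φ).ι ≫ hU.fromSpec ≫ sX) :=
    etale_of_forall_pow_eq_self (Spec.map (quotientFixedPointIdeal φ) ≫ hU.fromSpec ≫ sX) hq
      (pow_eq_self_of_apply_eq_pow φ (appLE_self_eq_pow hFr_app hFrU))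
  infer_instance

end Frobenius

end AlgebraicGeometry

theorem stmt2_general (q : ℕ)
    (k : Type u) [Field k] [Fintype k] (hcard : Fintype.card k = q)
    (X : Scheme.{u}) (sX : X ⟶ Spec (CommRingCat.of k)) [LocallyOfFiniteType sX]
    (Fr : X ⟶ X)
    (hFr_base : ∀ x, Fr.base x = x)
    (hFr_app : ∀ (U : X.Opens) (hU : Fr ⁻¹ᵁ U = U) (s : Γ(X, U)),
      Fr.app U s = X.presheaf.map (eqToHom hU).op (s ^ q)) :
    IsEtale (equalizer.ι Fr (𝟙 X) ≫ sX) := by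
  have hq : 1 < q := hcard ▸ Fintype.one_lt_card
  refine IsZariskiLocalAtSource.of_iSup_eq_top (P := @Etale)
    (fun U : X.affineOpens ↦ equalizer.ι Fr (𝟙 X) ⁻¹ᵁ U)
    ((equalizer.ι Fr (𝟙 X)).iSup_preimage_eq_top (iSup_affineOpens_eq_top X))
    fun U ↦ etale_equalizer_ι_comp_restrict_affine sX hq hFr_base hFr_app U.2

/-- Let `q` be a power of a prime `p`, let `k` be a finite field with `q`
elements, and let `X` be a scheme locally of finite type over `k`. Let `Fr : X ⟶ X` be the
`q`-power absolute Frobenius of `X` (the morphism over `k` which is the identity on the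
underlying topological space and raises sections to the `q`-th power). Let `V` be the
fixed-point subscheme of `Fr`, i.e. the equalizer of `Fr` and the identity of `X`. Then the
structure morphism `V → Spec k` is étale. -/
theorem stmt2 (p : ℕ) [Fact p.Prime] (n : ℕ) (hn : 0 < n) (q : ℕ) (hq : q = p ^ n)
    (k : Type u) [Field k] [Fintype k] (hcard : Fintype.card k = q)
    (X : Scheme.{u}) (sX : X ⟶ Spec (CommRingCat.of k)) [LocallyOfFiniteType sX]
    (Fr : X ⟶ X) (hFr_over : Fr ≫ sX = sX)
    (hFr_base : ∀ x, Fr.base x = x)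
    (hFr_app : ∀ (U : X.Opens) (hU : Fr ⁻¹ᵁ U = U) (s : Γ(X, U)),
      Fr.app U s = X.presheaf.map (eqToHom hU).op (s ^ q)) :
    IsEtale (equalizer.ι Fr (𝟙 X) ≫ sX) :=
  stmt2_general q k hcard X sX Fr hFr_base hFr_app
end

section
/- Let α be a set, σ : α → α an injective map, and D a finite nonempty subset of α of cardinality n. Assume that for every y ∈ D the n+1 points y, σ(y), σ²(y), …, σⁿ(y) are pairwise distinct. Then: (1) σ(D) ≠ D, where σ(D) denotes the image of D under σ; and (2) there exist y ∈ D with y ∉ σ(D), and an integer r with 1 ≤ r ≤ n, such that σ^i(y) ∈ D for all 0 ≤ i ≤ r−1, while σ^r(y) ∈ σ(D) and σ^r(y) ∉ D. -/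
/-- Let `α` be a set, `σ : α → α` an injective map, and `D` a finite nonempty
subset of `α` of cardinality `n`. Assume that for every `y ∈ D` the `n + 1` points
`y, σ(y), σ²(y), …, σⁿ(y)` are pairwise distinct. Then:
(1) `σ(D) ≠ D`; and
(2) there exist `y ∈ D` with `y ∉ σ(D)` and an integer `r` with `1 ≤ r ≤ n` such that
`σ^i(y) ∈ D` for all `0 ≤ i ≤ r - 1`, while `σ^r(y) ∈ σ(D)` and `σ^r(y) ∉ D`. -/
theorem stmt4 {α : Type*} [DecidableEq α] (σ : α → α) (hσ : Function.Injective σ)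
    (D : Finset α) (hD : D.Nonempty) (n : ℕ) (hn : D.card = n)
    (hdist : ∀ y ∈ D, ∀ i ≤ n, ∀ j ≤ n, i ≠ j → σ^[i] y ≠ σ^[j] y) :
    D.image σ ≠ D ∧
      ∃ y ∈ D, y ∉ D.image σ ∧
        ∃ r : ℕ, 1 ≤ r ∧ r ≤ n ∧ (∀ i < r, σ^[i] y ∈ D) ∧
          σ^[r] y ∈ D.image σ ∧ σ^[r] y ∉ D := by
  -- key lemma: no y ∈ D can have all σ^[i] y ∈ D for i ≤ n
  have key : ∀ y ∈ D, ¬ (∀ i ≤ n, σ^[i] y ∈ D) := by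
    intro y hy hall
    have hsub : (Finset.range (n + 1)).image (fun i => σ^[i] y) ⊆ D := by
      intro x hx
      obtain ⟨i, hi, rfl⟩ := Finset.mem_image.mp hx
      exact hall i (Nat.lt_succ_iff.mp (Finset.mem_range.mp hi))
    have hinj : Set.InjOn (fun i => σ^[i] y) (Finset.range (n + 1)) := by
      intro i hi j hj hij
      by_contra hne
      exact hdist y hy i (Nat.lt_succ_iff.mp (Finset.mem_range.mp hi))
        j (Nat.lt_succ_iff.mp (Finset.mem_range.mp hj)) hne hij
    have hcard := Finset.card_le_card hsub
    rw [Finset.card_image_of_injOn hinj, Finset.card_range, hn] at hcard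
    omega
  have hne : D.image σ ≠ D := by
    intro heq
    obtain ⟨y, hy⟩ := hD
    refine key y hy ?_
    intro i hi
    induction i with
    | zero => exact hy
    | succ k ih =>
      have hk : σ^[k] y ∈ D := ih (by omega)
      have : σ (σ^[k] y) ∈ D.image σ := Finset.mem_image_of_mem σ hk
      rw [heq] at this
      simpa [Function.iterate_succ_apply'] using this
  refine ⟨hne, ?_⟩
  -- find y ∈ D not in image
  have himg_card : (D.image σ).card = D.card := Finset.card_image_of_injective D hσ
  have hex : ∃ y ∈ D, y ∉ D.image σ := by
    by_contra h
    push_neg at h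
    have hsub : D ⊆ D.image σ := fun y hy => h y hy
    exact hne (Finset.eq_of_subset_of_card_le hsub (le_of_eq himg_card)).symm
  obtain ⟨y, hy, hyimg⟩ := hex
  refine ⟨y, hy, hyimg, ?_⟩
  have hexr : ∃ r, 1 ≤ r ∧ r ≤ n ∧ σ^[r] y ∉ D := by
    by_contra h
    push_neg at h
    refine key y hy ?_
    intro i hi
    match i with
    | 0 => exact hy
    | k + 1 => exact h (k + 1) (Nat.succ_le_succ (Nat.zero_le k)) hi
  classical
  let P : ℕ → Prop := fun r => 1 ≤ r ∧ r ≤ n ∧ σ^[r] y ∉ D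
  have hP : ∃ r, P r := hexr
  let r := Nat.find hP
  obtain ⟨hr1, hrn, hrD⟩ : P r := Nat.find_spec hP
  refine ⟨r, hr1, hrn, ?_, ?_, hrD⟩
  · intro i hi
    match i with
    | 0 => exact hy
    | k + 1 =>
      by_contra hmem
      have : P (k + 1) := ⟨Nat.succ_le_succ (Nat.zero_le k), le_trans (le_of_lt hi) hrn, hmem⟩
      exact Nat.find_min hP hi this
  · have hrm : σ^[r - 1] y ∈ D := by
      match hr : r, hr1 with
      | k + 1, _ =>
        simp only [Nat.add_sub_cancel]
        match k with
        | 0 => exact hy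
        | m + 1 =>
          by_contra hmem
          have hle : m + 1 ≤ n := by omega
          have : P (m + 1) := ⟨Nat.succ_le_succ (Nat.zero_le m), hle, hmem⟩
          have := Nat.find_min hP (show m + 1 < r by omega) this
          exact this.elim
    have : σ^[r] y = σ (σ^[r - 1] y) := by
      conv_lhs => rw [show r = (r - 1) + 1 by omega]
      rw [Function.iterate_succ_apply']
    rw [this]
    exact Finset.mem_image_of_mem σ hrm
end
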